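/- Let T > 0, A ≥ 0, and let f, g, G be nonnegative functions on [0,T] with f, g absolutely continuous, satisfying f'(t) ≤ A√(G(t)), g'(t) + G(t) ≤ α(t)g(t) + β(t)f(t)² a.e. on (0,T), and f(0) = 0, with α ∈ L¹(0,T) and t·β(t) ∈ L¹(0,T) nonnegative. Then f(t) ≤ A√(g(0))·√t·exp((1/2)∫₀ᵗ (α(s) + A²s·β(s)) ds) for all t ∈ [0,T]. -/

import Mathlib

/-!
By Cauchy–Schwarz, `f t ≤ A ∫₀ᵗ √G ≤ A √t (∫₀ᵗ G)^{1/2}`, so `β f² ≤ A² t β ∫₀ᵗ G`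
and the energy `h t = g t + ∫₀ᵗ G` obeys `h t ≤ g 0 + ∫₀ᵗ (α + A² s β) h`.
The integral form of Gronwall's lemma (an integrating factor argument for
absolutely continuous functions) gives `∫₀ᵗ G ≤ h t ≤ g 0 · exp ∫₀ᵗ (α + A² s β)`,
which is fed back into the bound for `f`.
-/

open MeasureTheory Set Filter

theorem MeasureTheory.IntegrableOn.intervalIntegrable_of_mem_Icc {E : Type*}
    [NormedAddCommGroup E] {f : ℝ → E} {a b s t : ℝ} (hf : IntegrableOn f (Icc a b))
    (hs : s ∈ Icc a b) (ht : t ∈ Icc a b) : IntervalIntegrable f volume s t :=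
  (hf.mono_set (uIcc_subset_Icc hs ht)).intervalIntegrable

theorem LipschitzOnWith.comp_absolutelyContinuousOnInterval {X Y : Type*} [PseudoMetricSpace X]
    [PseudoMetricSpace Y] {g : X → Y} {f : ℝ → X} {K : NNReal} {s : Set X} {a b : ℝ}
    (hg : LipschitzOnWith K g s) (hf : AbsolutelyContinuousOnInterval f a b)
    (hfs : MapsTo f (uIcc a b) s) : AbsolutelyContinuousOnInterval (g ∘ f) a b := by
  unfold AbsolutelyContinuousOnInterval at hf ⊢
  apply squeeze_zero' ?_ ?_ (by simpa using hf.const_mul (K : ℝ))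
  · exact Eventually.of_forall fun _ ↦ Finset.sum_nonneg fun _ _ ↦ dist_nonneg
  rw [eventually_inf_principal]
  filter_upwards with ⟨n, I⟩ hnI
  rw [Finset.mul_sum]
  gcongr with i hi
  exact hg.dist_le_mul _ (hfs (hnI.1 i hi).1) _ (hfs (hnI.1 i hi).2)

theorem ContDiff.comp_absolutelyContinuousOnInterval {g f : ℝ → ℝ} {a b : ℝ}
    (hg : ContDiff ℝ 1 g) (hf : AbsolutelyContinuousOnInterval f a b) :
    AbsolutelyContinuousOnInterval (g ∘ f) a b := by
  obtain ⟨M, hM⟩ := hf.exists_bound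
  obtain ⟨K, hK⟩ := hg.contDiffOn.exists_lipschitzOnWith (s := Icc (-M) M) (by decide)
    (convex_Icc _ _) isCompact_Icc
  exact hK.comp_absolutelyContinuousOnInterval hf fun x hx ↦ abs_le.1 (hM x hx)

theorem le_mul_exp_integral_of_le_add_integral {ψ h : ℝ → ℝ} {a b C : ℝ} (hab : a ≤ b)
    (hψ : IntervalIntegrable ψ volume a b) (hψ_nonneg : ∀ x ∈ Icc a b, 0 ≤ ψ x)
    (hh : ContinuousOn h (Icc a b))
    (hle : ∀ x ∈ Icc a b, h x ≤ C + ∫ y in a..x, ψ y * h y) :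
    h b ≤ C * Real.exp (∫ x in a..b, ψ x) := by
  set R : ℝ → ℝ := fun x ↦ ∫ y in a..x, ψ y * h y
  set Φ : ℝ → ℝ := fun x ↦ ∫ y in a..x, ψ y
  have hψh : IntervalIntegrable (fun y ↦ ψ y * h y) volume a b :=
    hψ.mul_continuousOn (uIcc_of_le hab ▸ hh)
  -- `(C + R) e^{-Φ}` has a.e. derivative `ψ (h - C - R) e^{-Φ} ≤ 0`, hence is nonincreasing.
  set F : ℝ → ℝ := fun x ↦ (C + R x) * Real.exp (-Φ x)
  have hF : AbsolutelyContinuousOnInterval F a b :=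
    ((contDiffOn_const (c := C)).absolutelyContinuousOnInterval.fun_add
      (hψh.absolutelyContinuousOnInterval_intervalIntegral left_mem_uIcc)).fun_mul
      (Real.contDiff_exp.comp_absolutelyContinuousOnInterval
        (hψ.absolutelyContinuousOnInterval_intervalIntegral left_mem_uIcc).fun_neg)
  have hF_deriv : ∀ᵐ x ∂volume.restrict (Icc a b), deriv F x ≤ 0 := by
    rw [ae_restrict_iff' measurableSet_Icc]
    filter_upwards [hψh.ae_hasDerivAt_integral, hψ.ae_hasDerivAt_integral] with x hR hΦ hx
    have hx' : x ∈ uIcc a b := Icc_subset_uIcc hx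
    have hFx : HasDerivAt F (ψ x * h x * Real.exp (-Φ x) + (C + R x) *
        (Real.exp (-Φ x) * -ψ x)) x :=
      ((hR hx' a left_mem_uIcc).const_add C).mul ((hΦ hx' a left_mem_uIcc).neg.exp)
    calc deriv F x = ψ x * (h x - (C + R x)) * Real.exp (-Φ x) := by rw [hFx.deriv]; ring
      _ ≤ 0 := mul_nonpos_of_nonpos_of_nonneg (mul_nonpos_of_nonneg_of_nonpos (hψ_nonneg x hx)
          (sub_nonpos.2 (hle x hx))) (Real.exp_pos _).le
  have hF_le : F b ≤ F a := by
    have h_int := intervalIntegral.integral_mono_ae_restrict hab hF.intervalIntegrable_deriv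
      intervalIntegrable_const hF_deriv
    rw [hF.integral_deriv_eq_sub, intervalIntegral.integral_zero] at h_int
    linarith
  have hFa : F a = C := by simp [F, R, Φ]
  calc h b ≤ C + R b := hle b (right_mem_Icc.2 hab)
    _ ≤ C * Real.exp (Φ b) := by
      rwa [hFa, show F b = (C + R b) * Real.exp (-Φ b) from rfl, Real.exp_neg,
        ← div_eq_mul_inv, div_le_iff₀ (Real.exp_pos _)] at hF_le

theorem MeasureTheory.Integrable.memLp_two_sqrt {X : Type*} [MeasurableSpace X] {μ : Measure X}
    {G : X → ℝ} (hG : Integrable G μ) : MemLp (fun x ↦ √(G x)) 2 μ := by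
  refine (memLp_two_iff_integrable_sq
    (Real.continuous_sqrt.comp_aestronglyMeasurable hG.aestronglyMeasurable)).2 ?_
  refine hG.norm.mono' (by fun_prop) (Eventually.of_forall fun x ↦ ?_)
  rw [Real.sq_sqrt', Real.norm_eq_abs, Real.norm_eq_abs]
  exact (abs_of_nonneg (le_max_right _ _)).trans_le (max_le (le_abs_self _) (abs_nonneg _))

theorem IntervalIntegrable.sqrt {G : ℝ → ℝ} {a b : ℝ} (hG : IntervalIntegrable G volume a b) :
    IntervalIntegrable (fun x ↦ √(G x)) volume a b :=
  ⟨hG.1.memLp_two_sqrt.integrable one_le_two, hG.2.memLp_two_sqrt.integrable one_le_two⟩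

theorem intervalIntegral.integral_sqrt_le_sqrt_mul_sqrt {G : ℝ → ℝ} {a b : ℝ} (hab : a ≤ b)
    (hG : IntervalIntegrable G volume a b) (hG_nonneg : ∀ x ∈ Ioc a b, 0 ≤ G x) :
    ∫ x in a..b, √(G x) ≤ √(b - a) * √(∫ x in a..b, G x) := by
  have hG_ae : (fun x ↦ √(G x) ^ 2) =ᵐ[volume.restrict (Ioc a b)] G := by
    filter_upwards [ae_restrict_mem measurableSet_Ioc] with x hx
    rw [Real.sq_sqrt (hG_nonneg x hx)]
  have := integral_mul_le_Lp_mul_Lq_of_nonneg Real.HolderConjugate.two_two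
    (Eventually.of_forall fun _ ↦ zero_le_one) (Eventually.of_forall fun x ↦ Real.sqrt_nonneg _)
    (memLp_const 1) (ENNReal.ofReal_ofNat 2 ▸ hG.1.memLp_two_sqrt)
  simp only [one_mul, Real.rpow_two, MeasureTheory.integral_congr_ae hG_ae,
    ← Real.sqrt_eq_rpow] at this
  simpa [intervalIntegral.integral_of_le hab, hab] using this

theorem intervalIntegral.integral_le_mul_sqrt_mul_sqrt_of_ae_le {f' G : ℝ → ℝ} {A a b : ℝ}
    (hab : a ≤ b) (hA : 0 ≤ A) (hf' : IntervalIntegrable f' volume a b)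
    (hG : IntervalIntegrable G volume a b) (hG_nonneg : ∀ x ∈ Ioc a b, 0 ≤ G x)
    (h : ∀ᵐ x ∂volume.restrict (Ioo a b), f' x ≤ A * √(G x)) :
    ∫ x in a..b, f' x ≤ A * √(b - a) * √(∫ x in a..b, G x) := by
  rw [Measure.restrict_congr_set Ioo_ae_eq_Icc] at h
  calc ∫ x in a..b, f' x ≤ ∫ x in a..b, A * √(G x) :=
        integral_mono_ae_restrict hab hf' (hG.sqrt.const_mul A) h
    _ ≤ A * √(b - a) * √(∫ x in a..b, G x) := by
      rw [integral_const_mul, mul_assoc]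
      exact mul_le_mul_of_nonneg_left (integral_sqrt_le_sqrt_mul_sqrt hab hG hG_nonneg) hA

theorem intervalIntegral.add_integral_le_of_ae_add_le {g g' G k : ℝ → ℝ} {a b : ℝ} (hab : a ≤ b)
    (hg' : IntervalIntegrable g' volume a b) (hG : IntervalIntegrable G volume a b)
    (hk : IntervalIntegrable k volume a b) (hg : g b = g a + ∫ x in a..b, g' x)
    (h : ∀ᵐ x ∂volume.restrict (Ioo a b), g' x + G x ≤ k x) :
    g b + ∫ x in a..b, G x ≤ g a + ∫ x in a..b, k x := by
  rw [Measure.restrict_congr_set Ioo_ae_eq_Icc] at h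
  rw [hg, add_assoc, ← integral_add hg' hG]
  exact add_le_add_right (integral_mono_ae_restrict hab (hg'.add hG) hk h) _

theorem le_add_mul_sqrt_mul_sqrt_integral {f f' G : ℝ → ℝ} {A a b : ℝ} (hA : 0 ≤ A)
    (hf'_int : IntegrableOn f' (Icc a b)) (hG_int : IntegrableOn G (Icc a b))
    (hG_nonneg : ∀ t ∈ Icc a b, 0 ≤ G t) (hf_ftc : ∀ t ∈ Icc a b, f t = f a + ∫ s in a..t, f' s)
    (h : ∀ᵐ t ∂volume.restrict (Ioo a b), f' t ≤ A * √(G t)) :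
    ∀ t ∈ Icc a b, f t ≤ f a + A * √(t - a) * √(∫ s in a..t, G s) := by
  intro t ht
  have ha : a ∈ Icc a b := left_mem_Icc.2 (ht.1.trans ht.2)
  rw [hf_ftc t ht]
  gcongr
  exact intervalIntegral.integral_le_mul_sqrt_mul_sqrt_of_ae_le ht.1 hA
    (hf'_int.intervalIntegrable_of_mem_Icc ha ht) (hG_int.intervalIntegrable_of_mem_Icc ha ht)
    (fun s hs ↦ hG_nonneg s ⟨hs.1.le, hs.2.trans ht.2⟩)
    (ae_restrict_of_ae_restrict_of_subset (Ioo_subset_Ioo_right ht.2) h)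

theorem add_integral_le_mul_exp_integral {g g' G ψ : ℝ → ℝ} {a b : ℝ}
    (hg'_int : IntegrableOn g' (Icc a b)) (hG_int : IntegrableOn G (Icc a b))
    (hψ_int : IntegrableOn ψ (Icc a b)) (hψ_nonneg : ∀ t ∈ Icc a b, 0 ≤ ψ t)
    (hg_ftc : ∀ t ∈ Icc a b, g t = g a + ∫ s in a..t, g' s)
    (h : ∀ᵐ t ∂volume.restrict (Ioo a b), g' t + G t ≤ ψ t * (g t + ∫ s in a..t, G s)) :
    ∀ t ∈ Icc a b, g t + ∫ s in a..t, G s ≤ g a * Real.exp (∫ s in a..t, ψ s) := by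
  intro t ht
  have ha : a ∈ Icc a b := left_mem_Icc.2 (ht.1.trans ht.2)
  have hsub : Icc a t ⊆ Icc a b := Icc_subset_Icc_right ht.2
  have h_cont : ContinuousOn (fun s ↦ g s + ∫ u in a..s, G u) (Icc a t) := by
    have hg_cont := ((hg'_int.intervalIntegrable_of_mem_Icc ha ht)
      |>.absolutelyContinuousOnInterval_intervalIntegral left_mem_uIcc).continuousOn
    have hI_cont := ((hG_int.intervalIntegrable_of_mem_Icc ha ht)
      |>.absolutelyContinuousOnInterval_intervalIntegral left_mem_uIcc).continuousOn
    rw [uIcc_of_le ht.1] at hg_cont hI_cont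
    exact ((continuousOn_const.add hg_cont).congr fun s hs ↦ hg_ftc s (hsub hs)).add hI_cont
  refine le_mul_exp_integral_of_le_add_integral ht.1 (hψ_int.intervalIntegrable_of_mem_Icc ha ht)
    (fun s hs ↦ hψ_nonneg s (hsub hs)) h_cont fun s hs ↦ ?_
  have hsT := hsub hs
  exact intervalIntegral.add_integral_le_of_ae_add_le hs.1
    (hg'_int.intervalIntegrable_of_mem_Icc ha hsT) (hG_int.intervalIntegrable_of_mem_Icc ha hsT)
    ((hψ_int.intervalIntegrable_of_mem_Icc ha hsT).mul_continuousOn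
      (uIcc_of_le hs.1 ▸ h_cont.mono (Icc_subset_Icc_right hs.2)))
    (hg_ftc s hsT) (ae_restrict_of_ae_restrict_of_subset (Ioo_subset_Ioo_right hsT.2) h)

theorem add_le_mul_add_of_le_mul_sqrt_mul_sqrt {g' G g f α β A s I : ℝ} (hg : 0 ≤ g)
    (hf : 0 ≤ f) (hα : 0 ≤ α) (hβ : 0 ≤ β) (hs : 0 ≤ s) (hI : 0 ≤ I) (hf_le : f ≤ A * √s * √I)
    (h : g' + G ≤ α * g + β * f ^ 2) : g' + G ≤ (α + A ^ 2 * s * β) * (g + I) := by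
  have hf_sq : f ^ 2 ≤ A ^ 2 * s * I := by
    calc f ^ 2 ≤ (A * √s * √I) ^ 2 := pow_le_pow_left₀ hf hf_le 2
      _ = A ^ 2 * s * I := by rw [mul_pow, mul_pow, Real.sq_sqrt hs, Real.sq_sqrt hI]
  nlinarith [mul_le_mul_of_nonneg_left hf_sq hβ, mul_nonneg hα hI,
    mul_nonneg (mul_nonneg (mul_nonneg (sq_nonneg A) hs) hβ) hg]

theorem gronwall_type_f_general (T A : ℝ) (hA : 0 ≤ A)
    (f g G α β f' g' : ℝ → ℝ)
    (hf_nonneg : ∀ t ∈ Icc (0:ℝ) T, 0 ≤ f t)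
    (hg_nonneg : ∀ t ∈ Icc (0:ℝ) T, 0 ≤ g t)
    (hG_nonneg : ∀ t ∈ Icc (0:ℝ) T, 0 ≤ G t)
    (hα_nonneg : ∀ t ∈ Icc (0:ℝ) T, 0 ≤ α t)
    (hβ_nonneg : ∀ t ∈ Icc (0:ℝ) T, 0 ≤ β t)
    (hf'_int : IntegrableOn f' (Icc 0 T))
    (hg'_int : IntegrableOn g' (Icc 0 T))
    (hG_int : IntegrableOn G (Icc 0 T))
    (hα_int : IntegrableOn α (Icc 0 T))
    (hβ_int : IntegrableOn (fun t => t * β t) (Icc 0 T))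
    (hf_ftc : ∀ t ∈ Icc (0:ℝ) T, f t = f 0 + ∫ s in (0:ℝ)..t, f' s)
    (hg_ftc : ∀ t ∈ Icc (0:ℝ) T, g t = g 0 + ∫ s in (0:ℝ)..t, g' s)
    (hf0 : f 0 = 0)
    (h1 : ∀ᵐ t ∂(volume.restrict (Ioo 0 T)), f' t ≤ A * Real.sqrt (G t))
    (h2 : ∀ᵐ t ∂(volume.restrict (Ioo 0 T)),
      g' t + G t ≤ α t * g t + β t * (f t) ^ 2) :
    ∀ t ∈ Icc (0:ℝ) T,
      f t ≤ A * Real.sqrt (g 0) * Real.sqrt t *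
        Real.exp ((1 / 2) * ∫ s in (0:ℝ)..t, (α s + A ^ 2 * s * β s)) := by
  have hf_le : ∀ t ∈ Icc 0 T, f t ≤ A * √t * √(∫ s in 0..t, G s) := by
    simpa [hf0] using le_add_mul_sqrt_mul_sqrt_integral hA hf'_int hG_int hG_nonneg hf_ftc h1
  have hI_nonneg : ∀ t ∈ Icc 0 T, 0 ≤ ∫ s in 0..t, G s := fun t ht ↦
    intervalIntegral.integral_nonneg ht.1 fun s hs ↦ hG_nonneg s ⟨hs.1, hs.2.trans ht.2⟩
  have h_rate : ∀ᵐ t ∂volume.restrict (Ioo 0 T),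
      g' t + G t ≤ (α t + A ^ 2 * t * β t) * (g t + ∫ s in 0..t, G s) := by
    filter_upwards [h2, ae_restrict_mem measurableSet_Ioo] with t h2t ht
    replace ht := Ioo_subset_Icc_self ht
    exact add_le_mul_add_of_le_mul_sqrt_mul_sqrt (hg_nonneg t ht) (hf_nonneg t ht)
      (hα_nonneg t ht) (hβ_nonneg t ht) ht.1 (hI_nonneg t ht) (hf_le t ht) h2t
  have hψ_int : IntegrableOn (fun t ↦ α t + A ^ 2 * t * β t) (Icc 0 T) :=
    (hα_int.add (hβ_int.const_mul (A ^ 2))).congr_fun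
      (fun t _ ↦ by simp only [Pi.add_apply]; ring) measurableSet_Icc
  have h_energy := add_integral_le_mul_exp_integral hg'_int hG_int hψ_int
    (fun t ht ↦ add_nonneg (hα_nonneg t ht)
      (mul_nonneg (mul_nonneg (sq_nonneg A) ht.1) (hβ_nonneg t ht))) hg_ftc h_rate
  intro t ht
  have hg0 := hg_nonneg 0 ⟨le_rfl, ht.1.trans ht.2⟩
  calc f t ≤ A * √t * √(∫ s in 0..t, G s) := hf_le t ht
    _ ≤ A * √t * √(g 0 * Real.exp (∫ s in 0..t, (α s + A ^ 2 * s * β s))) := by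
      gcongr; linarith [h_energy t ht, hg_nonneg t ht]
    _ = _ := by rw [Real.sqrt_mul hg0, ← Real.exp_half]; ring_nf

/-- Lemma 2.5 (Gronwall-type inequality), estimate for `f`. -/
theorem gronwall_type_f (T A : ℝ) (hT : 0 < T) (hA : 0 ≤ A)
    (f g G α β f' g' : ℝ → ℝ)
    (hf_nonneg : ∀ t ∈ Icc (0:ℝ) T, 0 ≤ f t)
    (hg_nonneg : ∀ t ∈ Icc (0:ℝ) T, 0 ≤ g t)
    (hG_nonneg : ∀ t ∈ Icc (0:ℝ) T, 0 ≤ G t)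
    (hα_nonneg : ∀ t ∈ Icc (0:ℝ) T, 0 ≤ α t)
    (hβ_nonneg : ∀ t ∈ Icc (0:ℝ) T, 0 ≤ β t)
    (hf'_int : IntegrableOn f' (Icc 0 T))
    (hg'_int : IntegrableOn g' (Icc 0 T))
    (hG_int : IntegrableOn G (Icc 0 T))
    (hα_int : IntegrableOn α (Icc 0 T))
    (hβ_int : IntegrableOn (fun t => t * β t) (Icc 0 T))
    (hf_ftc : ∀ t ∈ Icc (0:ℝ) T, f t = f 0 + ∫ s in (0:ℝ)..t, f' s)
    (hg_ftc : ∀ t ∈ Icc (0:ℝ) T, g t = g 0 + ∫ s in (0:ℝ)..t, g' s)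
    (hf0 : f 0 = 0)
    (h1 : ∀ᵐ t ∂(volume.restrict (Ioo 0 T)), f' t ≤ A * Real.sqrt (G t))
    (h2 : ∀ᵐ t ∂(volume.restrict (Ioo 0 T)),
      g' t + G t ≤ α t * g t + β t * (f t) ^ 2) :
    ∀ t ∈ Icc (0:ℝ) T,
      f t ≤ A * Real.sqrt (g 0) * Real.sqrt t *
        Real.exp ((1 / 2) * ∫ s in (0:ℝ)..t, (α s + A ^ 2 * s * β s)) :=
  gronwall_type_f_general T A hA f g G α β f' g' hf_nonneg hg_nonneg hG_nonneg hα_nonneg hβ_nonneg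
    hf'_int hg'_int hG_int hα_int hβ_int hf_ftc hg_ftc hf0 h1 h2
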